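/- Let n ≥ 2, β < 0, s ∈ ℕ, and let f(x) = ψ(x) (log(e·4^n / |x - a|^n))^β, where ψ is a smooth function supported in the annulus A = {x ∈ ℝ^n : 1/2 < |x| < 2} and a ∈ A. Then for every multi-index α with 1 ≤ |α| ≤ s, the weak derivative satisfies the pointwise bound |∂^α f(x)| ≤ C χ_A(x) (log(e·4^n/|x-a|^n))^{β-1} |x - a|^{-|α|}, with C independent of a. -/

import Mathlib

open Real Set Filter

private lemma isOpen_logset (c₁ b : ℝ) : IsOpen {u : ℝ | 0 < u ∧ c₁ * Real.log u < b} := by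
  have h : {u : ℝ | 0 < u ∧ c₁ * Real.log u < b}
      = Set.Ioi (0:ℝ) ∩ (fun u => c₁ * Real.log u) ⁻¹' Set.Iio b := by
    ext u; simp [Set.mem_Ioi, Set.mem_Iio]
  rw [h]
  refine ContinuousOn.isOpen_inter_preimage ?_ isOpen_Ioi isOpen_Iio
  exact (Real.continuousOn_log.mono (fun u hu => ne_of_gt hu)).const_smul c₁

private lemma iteratedDeriv_formula (c₁ β : ℝ) (i : ℕ) :
    ∃ c : ℕ → ℝ, (1 ≤ i → c 0 = 0) ∧ (∀ j, i < j → c j = 0) ∧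
      ∀ b t : ℝ, 0 < t → c₁ * Real.log t < b →
        iteratedDeriv i (fun u => (b - c₁ * Real.log u) ^ β) t =
          (∑ j ∈ Finset.range (i + 1), c j * (b - c₁ * Real.log t) ^ (β - j)) *
            t ^ (-(i:ℝ)) := by
  induction i with
  | zero =>
    refine ⟨fun j => if j = 0 then 1 else 0, by omega, fun j hj => if_neg (by omega), ?_⟩
    intro b t ht hbt
    simp [iteratedDeriv_zero]
  | succ i ih =>
    obtain ⟨c, hc0, hctop, hc⟩ := ih
    refine ⟨fun j => -(i:ℝ) * c j +
        (Nat.casesOn j 0 (fun m => -c₁ * (β - m) * c m) : ℝ), ?_, ?_, ?_⟩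
    · intro _
      rcases Nat.eq_zero_or_pos i with hi | hi
      · simp [hi]
      · simp [hc0 hi]
    · intro j hj
      match j, hj with
      | (m+1), hj => simp [hctop m (by omega), hctop (m+1) (by omega)]
    · intro b t ht hbt
      have hU : IsOpen {u : ℝ | 0 < u ∧ c₁ * Real.log u < b} := isOpen_logset c₁ b
      have htU : t ∈ {u : ℝ | 0 < u ∧ c₁ * Real.log u < b} := ⟨ht, hbt⟩
      have hev : iteratedDeriv i (fun u => (b - c₁ * Real.log u) ^ β) =ᶠ[nhds t]
          fun u => (∑ j ∈ Finset.range (i + 1), c j * (b - c₁ * Real.log u) ^ (β - j)) *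
            u ^ (-(i:ℝ)) := by
        filter_upwards [hU.mem_nhds htU] with u hu
        exact hc b u hu.1 hu.2
      rw [iteratedDeriv_succ, hev.deriv_eq]
      have hℓpos : 0 < b - c₁ * Real.log t := by linarith
      have hℓ : HasDerivAt (fun u : ℝ => b - c₁ * Real.log u) (-(c₁ * t⁻¹)) t := by
        simpa using ((Real.hasDerivAt_log (ne_of_gt ht)).const_mul c₁).const_sub b
      have hterm : ∀ j ∈ Finset.range (i+1), HasDerivAt
          (fun u : ℝ => c j * (b - c₁ * Real.log u) ^ (β - j))
          (c j * (-(c₁ * t⁻¹) * (β - j) * (b - c₁ * Real.log t) ^ (β - j - 1))) t := by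
        intro j _
        exact (hℓ.rpow_const (Or.inl (ne_of_gt hℓpos))).const_mul (c j)
      have hsum : HasDerivAt
          (fun u : ℝ => ∑ j ∈ Finset.range (i+1), c j * (b - c₁ * Real.log u) ^ (β - j))
          (∑ j ∈ Finset.range (i+1),
            c j * (-(c₁ * t⁻¹) * (β - j) * (b - c₁ * Real.log t) ^ (β - j - 1))) t :=
        HasDerivAt.fun_sum hterm
      have hpow : HasDerivAt (fun u : ℝ => u ^ (-(i:ℝ)))
          (-(i:ℝ) * t ^ (-(i:ℝ) - 1)) t :=
        Real.hasDerivAt_rpow_const (Or.inl (ne_of_gt ht))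
      have hprod := hsum.fun_mul hpow
      rw [hprod.deriv]
      set ℓ := b - c₁ * Real.log t with hℓdef
      have hP1 : t ^ (-(i:ℝ) - 1) = t ^ (-((i:ℕ)+1:ℕ):ℝ) := by
        congr 1; push_cast; ring
      have hP2 : t ^ (-(i:ℝ)) * t⁻¹ = t ^ (-((i:ℕ)+1:ℕ):ℝ) := by
        rw [← Real.rpow_neg_one t, ← Real.rpow_add ht]
        congr 1; push_cast; ring
      have h1 : ∀ j : ℕ, c j * (-(c₁ * t⁻¹) * (β - j) * ℓ ^ (β - j - 1))
          = (-c₁ * (β - j) * c j * ℓ ^ (β - ((j:ℕ)+1:ℕ))) * t⁻¹ := by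
        intro j
        have : β - (j:ℝ) - 1 = β - ((j:ℕ)+1:ℕ) := by push_cast; ring
        rw [← this]; ring
      rw [Finset.sum_congr rfl (fun j _ => h1 j), ← Finset.sum_mul]
      have h2 : ∀ j : ℕ, (-(i:ℝ) * c j + (Nat.casesOn j 0 (fun m => -c₁ * (β - m) * c m) : ℝ))
            * ℓ ^ (β - j)
          = -(i:ℝ) * (c j * ℓ ^ (β - j))
            + (Nat.casesOn j 0 (fun m => -c₁ * (β - m) * c m) : ℝ) * ℓ ^ (β - j) := by
        intro j; ring
      rw [Finset.sum_congr rfl (fun j _ => h2 j), Finset.sum_add_distrib, ← Finset.mul_sum]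
      rw [Finset.sum_range_succ (fun j => c j * ℓ ^ (β - j)) (i+1), hctop (i+1) (by omega)]
      rw [Finset.sum_range_succ' (fun j => (Nat.casesOn j 0 (fun m => -c₁ * (β - m) * c m) : ℝ)
            * ℓ ^ (β - j)) (i+1)]
      simp only [Nat.rec_zero, zero_mul, mul_zero, add_zero]
      linear_combination (∑ j ∈ Finset.range (i+1),
          -c₁ * (β - (j:ℝ)) * c j * ℓ ^ (β - ((j:ℕ)+1:ℕ))) * hP2
        + (-(i:ℝ) * ∑ j ∈ Finset.range (i+1), c j * ℓ ^ (β - j)) * hP1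

private lemma iteratedDeriv_bound (c₁ β : ℝ) (s : ℕ) :
    ∃ B : ℝ, 0 < B ∧ ∀ i, 1 ≤ i → i ≤ s → ∀ b t : ℝ, 0 < t →
      1 ≤ b - c₁ * Real.log t →
      |iteratedDeriv i (fun u => (b - c₁ * Real.log u) ^ β) t| ≤
        B * (b - c₁ * Real.log t) ^ (β - 1) * t ^ (-(i:ℝ)) := by
  choose c hc0 hctop hc using fun i => iteratedDeriv_formula c₁ β i
  refine ⟨1 + ∑ i ∈ Finset.range (s+1), ∑ j ∈ Finset.range (i+1), |c i j|, by positivity, ?_⟩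
  intro i hi1 his b t ht hbt
  have hℓ1 : (1:ℝ) ≤ b - c₁ * Real.log t := hbt
  have hℓpos : (0:ℝ) < b - c₁ * Real.log t := by linarith
  rw [hc i b t ht (by linarith)]
  set ℓ := b - c₁ * Real.log t with hℓdef
  have htp : (0:ℝ) < t ^ (-(i:ℝ)) := Real.rpow_pos_of_pos ht _
  rw [abs_mul, abs_of_pos htp]
  have hsum : |∑ j ∈ Finset.range (i+1), c i j * ℓ ^ (β - j)|
      ≤ (∑ j ∈ Finset.range (i+1), |c i j|) * ℓ ^ (β - 1) := by
    calc |∑ j ∈ Finset.range (i+1), c i j * ℓ ^ (β - j)|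
        ≤ ∑ j ∈ Finset.range (i+1), |c i j * ℓ ^ (β - j)| := Finset.abs_sum_le_sum_abs _ _
      _ ≤ ∑ j ∈ Finset.range (i+1), |c i j| * ℓ ^ (β - 1) := by
          apply Finset.sum_le_sum
          intro j hj
          rw [abs_mul]
          rcases Nat.eq_zero_or_pos j with hj0 | hjpos
          · subst hj0
            rw [hc0 i hi1]
            simp only [abs_zero, zero_mul]
            positivity
          · apply mul_le_mul_of_nonneg_left _ (abs_nonneg _)
            rw [abs_of_pos (Real.rpow_pos_of_pos hℓpos _)]
            apply Real.rpow_le_rpow_of_exponent_le hℓ1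
            have : (1:ℝ) ≤ (j:ℝ) := by exact_mod_cast hjpos
            linarith
      _ = (∑ j ∈ Finset.range (i+1), |c i j|) * ℓ ^ (β - 1) := by
          rw [Finset.sum_mul]
  apply mul_le_mul_of_nonneg_right _ (le_of_lt htp)
  refine hsum.trans ?_
  apply mul_le_mul_of_nonneg_right _ (le_of_lt (Real.rpow_pos_of_pos hℓpos _))
  have hmem : i ∈ Finset.range (s+1) := Finset.mem_range.mpr (by omega)
  have h1 : ∑ j ∈ Finset.range (i+1), |c i j|
      ≤ ∑ i' ∈ Finset.range (s+1), ∑ j ∈ Finset.range (i'+1), |c i' j| :=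
    Finset.single_le_sum (f := fun i' => ∑ j ∈ Finset.range (i'+1), |c i' j|)
      (fun i' _ => Finset.sum_nonneg fun j _ => abs_nonneg _) hmem
  linarith
noncomputable def Binner (n : ℕ) : EuclideanSpace ℝ (Fin n) →L[ℝ] EuclideanSpace ℝ (Fin n) →L[ℝ] ℝ :=
  (isBoundedBilinearMap_inner (𝕜 := ℝ)).toContinuousLinearMap

lemma Binner_norm_le (n : ℕ) : ‖Binner n‖ ≤ 1 := by
  apply ContinuousLinearMap.opNorm_le_bound _ zero_le_one
  intro x
  apply ContinuousLinearMap.opNorm_le_bound _ (by positivity)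
  intro y
  rw [one_mul]
  exact norm_inner_le_norm x y

lemma Binner_self (n : ℕ) (x : EuclideanSpace ℝ (Fin n)) : Binner n x x = ‖x‖^2 := by
  rw [show Binner n x x = inner ℝ x x from rfl, real_inner_self_eq_norm_sq]

private lemma norm_iteratedFDeriv_w_le {n : ℕ} (a x : EuclideanSpace ℝ (Fin n)) (r : ℝ)
    (hr : 0 < r) (m : ℕ) :
    ‖iteratedFDeriv ℝ m (fun y => r⁻¹ • (y - a)) x‖ ≤
      if m = 0 then ‖r⁻¹ • (x - a)‖ else if m = 1 then r⁻¹ else 0 := by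
  set A : EuclideanSpace ℝ (Fin n) →L[ℝ] EuclideanSpace ℝ (Fin n) :=
    r⁻¹ • ContinuousLinearMap.id ℝ _ with hA
  have hw : (fun y : EuclideanSpace ℝ (Fin n) => r⁻¹ • (y - a))
      = fun y => A y + (-(r⁻¹ • a)) := by
    funext y
    simp [hA, smul_sub, sub_eq_add_neg]
  have hfd : ∀ y, fderiv ℝ (fun y : EuclideanSpace ℝ (Fin n) => r⁻¹ • (y - a)) y = A := by
    intro y
    rw [hw]
    exact (A.hasFDerivAt.add_const _).fderiv
  have hAnorm : ‖A‖ ≤ r⁻¹ := by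
    rw [hA]
    calc ‖r⁻¹ • ContinuousLinearMap.id ℝ (EuclideanSpace ℝ (Fin n))‖
        ≤ ‖r⁻¹‖ * ‖ContinuousLinearMap.id ℝ (EuclideanSpace ℝ (Fin n))‖ :=
          ContinuousLinearMap.opNorm_smul_le _ _
      _ ≤ r⁻¹ * 1 := by
          apply mul_le_mul (le_of_eq ?_)
            ContinuousLinearMap.norm_id_le (norm_nonneg _) (by positivity)
          rw [Real.norm_eq_abs, abs_of_pos (by positivity)]
      _ = r⁻¹ := mul_one _
  match m with
  | 0 => simp [norm_iteratedFDeriv_zero]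
  | 1 =>
    simp only [if_neg one_ne_zero, if_pos rfl]
    rw [← norm_iteratedFDeriv_fderiv, norm_iteratedFDeriv_zero, hfd]
    exact hAnorm
  | (m+2) =>
    simp only [if_neg (Nat.succ_ne_zero _), if_neg (by omega : ¬ m + 2 = 1)]
    rw [← norm_iteratedFDeriv_fderiv]
    have : (fderiv ℝ (fun y : EuclideanSpace ℝ (Fin n) => r⁻¹ • (y - a))) = fun _ => A :=
      funext hfd
    rw [this, iteratedFDeriv_const_of_ne (by omega)]
    simp

private lemma norm_iteratedFDeriv_v_le {n : ℕ} (a x : EuclideanSpace ℝ (Fin n)) (r : ℝ)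
    (hr : 0 < r) (hrx : ‖x - a‖ = r) (i : ℕ) (hi : 1 ≤ i) :
    ‖iteratedFDeriv ℝ i (fun y => (Binner n) (r⁻¹ • (y - a)) (r⁻¹ • (y - a))) x‖
      ≤ (2/r)^i := by
  have hw : ContDiff ℝ (⊤ : WithTop ℕ∞) (fun y : EuclideanSpace ℝ (Fin n) => r⁻¹ • (y - a)) :=
    (contDiff_id.sub contDiff_const).const_smul r⁻¹
  have hwx : ‖r⁻¹ • (x - a)‖ = 1 := by
    rw [norm_smul, Real.norm_eq_abs, abs_of_pos (by positivity), hrx]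
    field_simp
  have key := (Binner n).norm_iteratedFDeriv_le_of_bilinear hw hw x (n := i) le_top
  have hB := Binner_norm_le n
  have hwb := fun m => norm_iteratedFDeriv_w_le a x r hr m
  have hsum_nonneg : (0:ℝ) ≤ ∑ m ∈ Finset.range (i + 1),
      (i.choose m : ℝ) * ‖iteratedFDeriv ℝ m (fun y => r⁻¹ • (y - a)) x‖ *
        ‖iteratedFDeriv ℝ (i - m) (fun y => r⁻¹ • (y - a)) x‖ := by
    apply Finset.sum_nonneg; intro m _; positivity
  refine key.trans ?_
  have hBmul : ‖Binner n‖ * (∑ m ∈ Finset.range (i + 1),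
      (i.choose m : ℝ) * ‖iteratedFDeriv ℝ m (fun y => r⁻¹ • (y - a)) x‖ *
        ‖iteratedFDeriv ℝ (i - m) (fun y => r⁻¹ • (y - a)) x‖)
      ≤ ∑ m ∈ Finset.range (i + 1),
      (i.choose m : ℝ) * ‖iteratedFDeriv ℝ m (fun y => r⁻¹ • (y - a)) x‖ *
        ‖iteratedFDeriv ℝ (i - m) (fun y => r⁻¹ • (y - a)) x‖ :=
    mul_le_of_le_one_left hsum_nonneg hB
  refine hBmul.trans ?_
  match i, hi with
  | 1, _ =>
    rw [Finset.sum_range_succ, Finset.sum_range_succ, Finset.sum_range_zero]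
    have h1 := hwb 1
    norm_num at h1
    simp only [Nat.choose_self, Nat.choose_zero_right, Nat.cast_one, zero_add, one_mul,
      Nat.sub_self, Nat.sub_zero, pow_one]
    have hn0 : ‖iteratedFDeriv ℝ 0 (fun y => r⁻¹ • (y - a)) x‖ = 1 := by
      rw [norm_iteratedFDeriv_zero, hwx]
    rw [hn0]
    have : (0:ℝ) ≤ ‖iteratedFDeriv ℝ 1 (fun y => r⁻¹ • (y - a)) x‖ := norm_nonneg _
    rw [div_eq_mul_inv, norm_iteratedFDeriv_one]
    nlinarith
  | 2, _ =>
    rw [Finset.sum_range_succ, Finset.sum_range_succ, Finset.sum_range_succ,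
      Finset.sum_range_zero]
    have h0 : ‖iteratedFDeriv ℝ 0 (fun y => r⁻¹ • (y - a)) x‖ = 1 := by
      rw [norm_iteratedFDeriv_zero, hwx]
    have h1 := hwb 1
    norm_num at h1
    have h2 := hwb 2
    norm_num at h2
    have h2' : ‖iteratedFDeriv ℝ 2 (fun y => r⁻¹ • (y - a)) x‖ = 0 := by
      rw [h2]; simp
    simp only [Nat.choose_self, Nat.choose_zero_right, Nat.choose_one_right, Nat.cast_one,
      Nat.cast_ofNat, zero_add, one_mul]
    norm_num [h0, h2']
    have hrpos : (0:ℝ) < r⁻¹ := by positivity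
    have := mul_le_mul h1 h1 (norm_nonneg _) (le_of_lt hrpos)
    rw [div_pow]
    rw [div_eq_mul_inv, ← inv_pow, show 2 - 1 = 1 from rfl, norm_iteratedFDeriv_one]
    nlinarith [norm_nonneg (iteratedFDeriv ℝ 1 (fun y => r⁻¹ • (y - a)) x)]
  | (m+3), _ =>
    have hz : ∀ j ∈ Finset.range (m+3+1),
        (Nat.choose (m+3) j : ℝ) * ‖iteratedFDeriv ℝ j (fun y => r⁻¹ • (y - a)) x‖ *
          ‖iteratedFDeriv ℝ (m+3-j) (fun y => r⁻¹ • (y - a)) x‖ = 0 := by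
      intro j hj
      rcases le_or_gt j 1 with hj1 | hj1
      · have h2 := hwb (m+3-j)
        rw [if_neg (by omega), if_neg (by omega)] at h2
        have : ‖iteratedFDeriv ℝ (m+3-j) (fun y => r⁻¹ • (y - a)) x‖ = 0 :=
          le_antisymm h2 (norm_nonneg _)
        rw [this, mul_zero]
      · have h2 := hwb j
        rw [if_neg (by omega), if_neg (by omega)] at h2
        have : ‖iteratedFDeriv ℝ j (fun y => r⁻¹ • (y - a)) x‖ = 0 :=
          le_antisymm h2 (norm_nonneg _)
        rw [this, mul_zero, zero_mul]
    rw [Finset.sum_eq_zero hz]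
    positivity

private lemma contDiffOn_logrpow (c₁ β b : ℝ) :
    ContDiffOn ℝ (⊤ : WithTop ℕ∞) (fun u => (b - c₁ * Real.log u) ^ β)
      {u : ℝ | 0 < u ∧ c₁ * Real.log u < b} := by
  intro u hu
  apply ContDiffAt.contDiffWithinAt
  have h1 : ContDiffAt ℝ (⊤ : WithTop ℕ∞) (fun u : ℝ => b - c₁ * Real.log u) u :=
    contDiffAt_const.sub (contDiffAt_const.mul (Real.contDiffAt_log.mpr (ne_of_gt hu.1)))
  exact h1.rpow_const_of_ne (ne_of_gt (by linarith [hu.2]))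

open MeasureTheory Set Real
open scoped ENNReal

set_option maxHeartbeats 2000000 in
theorem statement14 (n : ℕ) (hn : 2 ≤ n) (β : ℝ) (hβ : β < 0) (s : ℕ) (hs : 1 ≤ s)
    (ψ : EuclideanSpace ℝ (Fin n) → ℝ) (hψ : ContDiff ℝ (⊤ : ℕ∞) ψ)
    (hsupp : tsupport ψ ⊆ {x : EuclideanSpace ℝ (Fin n) | 1 / 2 < ‖x‖ ∧ ‖x‖ < 2}) :
    ∃ C : ℝ, 0 < C ∧
      ∀ a : EuclideanSpace ℝ (Fin n), 1 / 2 < ‖a‖ → ‖a‖ < 2 →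
        ∀ k : ℕ, 1 ≤ k → k ≤ s →
          ∀ x : EuclideanSpace ℝ (Fin n), x ≠ a →
            ‖iteratedFDeriv ℝ k
                (fun y => ψ y * Real.log (Real.exp 1 * 4 ^ n / ‖y - a‖ ^ n) ^ β) x‖
              ≤ C * Set.indicator {y : EuclideanSpace ℝ (Fin n) | 1 / 2 < ‖y‖ ∧ ‖y‖ < 2}
                    (fun _ => (1 : ℝ)) x
                  * Real.log (Real.exp 1 * 4 ^ n / ‖x - a‖ ^ n) ^ (β - 1)
                  * ‖x - a‖ ^ (-(k : ℝ)) := by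
  -- uniform bound on derivatives of ψ
  have hψcs : HasCompactSupport ψ := by
    refine (isCompact_closedBall (0 : EuclideanSpace ℝ (Fin n)) 2).of_isClosed_subset
      (isClosed_tsupport ψ) ?_
    intro y hy
    exact Metric.mem_closedBall.mpr (by simpa using (hsupp hy).2.le)
  have hMi : ∀ i : ℕ, ∃ Mi : ℝ, ∀ y, ‖iteratedFDeriv ℝ i ψ y‖ ≤ Mi := by
    intro i
    have hcont : Continuous (fun y => ‖iteratedFDeriv ℝ i ψ y‖) :=
      (hψ.continuous_iteratedFDeriv (by exact_mod_cast le_top)).norm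
    have hcs : HasCompactSupport fun y => ‖iteratedFDeriv ℝ i ψ y‖ :=
      (hψcs.iteratedFDeriv i).norm
    obtain ⟨y₀, hy₀⟩ := hcont.exists_forall_ge_of_hasCompactSupport hcs
    exact ⟨_, hy₀⟩
  choose Mi hMi' using hMi
  have hMi0 : ∀ i, 0 ≤ Mi i := fun i => le_trans (norm_nonneg _) (hMi' i 0)
  set M : ℝ := 1 + ∑ i ∈ Finset.range (s+1), Mi i with hMdef
  have hMpos : 0 < M := by
    have : (0:ℝ) ≤ ∑ i ∈ Finset.range (s+1), Mi i := Finset.sum_nonneg fun i _ => hMi0 i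
    rw [hMdef]; linarith
  have hM : ∀ i, i ≤ s → ∀ y, ‖iteratedFDeriv ℝ i ψ y‖ ≤ M := by
    intro i his y
    have h1 : Mi i ≤ ∑ i ∈ Finset.range (s+1), Mi i :=
      Finset.single_le_sum (fun i _ => hMi0 i) (Finset.mem_range.mpr (by omega))
    have := hMi' i y
    rw [hMdef]; linarith
  -- 1D derivative bound
  obtain ⟨B, hBpos, hB⟩ := iteratedDeriv_bound ((n:ℝ)/2) β s
  -- constants
  have hlogpos : (0:ℝ) ≤ Real.log (Real.exp 1 * 4^n) := by
    apply Real.log_nonneg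
    have h4 : (1:ℝ) ≤ 4^n := one_le_pow₀ (by norm_num)
    nlinarith [Real.one_le_exp (by norm_num : (0:ℝ) ≤ 1), Real.exp_pos 1]
  set c₂ : ℝ := 4 * Real.log (Real.exp 1 * 4^n) + 4 * n with hc₂def
  have hc₂pos : 0 < c₂ := by
    have : (0:ℝ) < n := by exact_mod_cast (by omega : 0 < n)
    rw [hc₂def]; linarith
  set CG : ℝ := (s.factorial : ℝ) * B * 2^s * 4^s + c₂ * 4^s with hCGdef
  have hCGpos : 0 < CG := by
    have h1 : (0:ℝ) < (s.factorial : ℝ) := by exact_mod_cast s.factorial_pos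
    rw [hCGdef]; positivity
  refine ⟨M * CG * 2^s + 1, by positivity, ?_⟩
  intro a ha1 ha2 k hk1 hks x hxa
  by_cases hxA : x ∈ {y : EuclideanSpace ℝ (Fin n) | 1 / 2 < ‖y‖ ∧ ‖y‖ < 2}
  swap
  · -- x outside the annulus: everything vanishes
    have hxc : x ∈ (tsupport ψ)ᶜ := fun hx => hxA (hsupp hx)
    have hev : (fun y => ψ y * Real.log (Real.exp 1 * 4 ^ n / ‖y - a‖ ^ n) ^ β)
        =ᶠ[nhdsWithin x Set.univ] (fun _ => (0:ℝ)) := by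
      apply Filter.Eventually.filter_mono nhdsWithin_le_nhds
      filter_upwards [(isClosed_tsupport ψ).isOpen_compl.mem_nhds hxc] with y hy
      rw [image_eq_zero_of_notMem_tsupport hy, zero_mul]
    have hx0 : ψ x * Real.log (Real.exp 1 * 4 ^ n / ‖x - a‖ ^ n) ^ β = 0 := by
      rw [image_eq_zero_of_notMem_tsupport hxc, zero_mul]
    have hzero : iteratedFDeriv ℝ k
        (fun y => ψ y * Real.log (Real.exp 1 * 4 ^ n / ‖y - a‖ ^ n) ^ β) x = 0 := by
      rw [← iteratedFDerivWithin_univ]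
      rw [Filter.EventuallyEq.iteratedFDerivWithin_eq hev hx0 k]
      rw [iteratedFDerivWithin_univ, iteratedFDeriv_zero_fun]
      rfl
    rw [hzero, Set.indicator_of_notMem hxA]
    simp
  · -- main case
    rw [Set.indicator_of_mem hxA]
    obtain ⟨hx1, hx2⟩ := hxA
    set r : ℝ := ‖x - a‖ with hrdef
    have hr : 0 < r := by
      rw [hrdef]; exact norm_pos_iff.mpr (sub_ne_zero.mpr hxa)
    have hr4 : r < 4 := by
      have := norm_sub_le x a
      rw [hrdef]; linarith
    set b : ℝ := Real.log (Real.exp 1 * 4^n) - n * Real.log r with hbdef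
    have hE4pos : (0:ℝ) < Real.exp 1 * 4^n := by positivity
    have hb_eq : Real.log (Real.exp 1 * 4^n / r^n) = b := by
      rw [Real.log_div (ne_of_gt hE4pos) (pow_ne_zero n (ne_of_gt hr)), Real.log_pow, hbdef]
    have hb1 : 1 ≤ b := by
      rw [← hb_eq]
      have hpow : r^n ≤ 4^n := pow_le_pow_left₀ hr.le hr4.le n
      have h1 : Real.exp 1 ≤ Real.exp 1 * 4^n / r^n := by
        rw [le_div_iff₀ (pow_pos hr n)]
        nlinarith [Real.exp_pos 1]
      calc (1:ℝ) = Real.log (Real.exp 1) := (Real.log_exp 1).symm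
        _ ≤ Real.log (Real.exp 1 * 4^n / r^n) :=
            Real.log_le_log (Real.exp_pos 1) h1
    have hbpos : 0 < b := lt_of_lt_of_le one_pos hb1
    have hnpos : (0:ℝ) < n := by exact_mod_cast (by omega : 0 < n)
    -- the sets and maps
    set w : EuclideanSpace ℝ (Fin n) → EuclideanSpace ℝ (Fin n) := fun y => r⁻¹ • (y - a)
      with hwdef
    set v : EuclideanSpace ℝ (Fin n) → ℝ := fun y => (Binner n) (w y) (w y) with hvdef
    set s₁ : Set (EuclideanSpace ℝ (Fin n)) :=
      {y | 0 < ‖y - a‖ ∧ ‖y - a‖ < r * Real.exp (b / n)} with hs₁def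
    have hcont : Continuous fun y : EuclideanSpace ℝ (Fin n) => ‖y - a‖ :=
      (continuous_id.sub continuous_const).norm
    have hs₁open : IsOpen s₁ := by
      rw [hs₁def]
      exact (isOpen_lt continuous_const hcont).inter (isOpen_lt hcont continuous_const)
    have hexp1 : 1 < Real.exp (b / n) := by
      have : 0 < b / n := by positivity
      calc (1:ℝ) = Real.exp 0 := Real.exp_zero.symm
        _ < Real.exp (b / n) := Real.exp_lt_exp.mpr this
    have hxs₁ : x ∈ s₁ := by
      rw [hs₁def]
      constructor
      · exact hr
      · nlinarith
    set U : Set ℝ := {u : ℝ | 0 < u ∧ (n:ℝ)/2 * Real.log u < b} with hUdef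
    have hUopen : IsOpen U := isOpen_logset ((n:ℝ)/2) b
    have hnormw : ∀ y, ‖w y‖ = r⁻¹ * ‖y - a‖ := by
      intro y
      rw [hwdef]
      simp only [norm_smul, Real.norm_eq_abs, abs_of_pos (inv_pos.mpr hr)]
    have hv_eq : ∀ y, v y = ‖w y‖^2 := fun y => Binner_self n (w y)
    have hmaps : Set.MapsTo v s₁ U := by
      intro y hy
      rw [hs₁def] at hy
      obtain ⟨hy1, hy2⟩ := hy
      have hwpos : 0 < ‖w y‖ := by rw [hnormw]; positivity
      have hwlt : ‖w y‖ < Real.exp (b / n) := by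
        rw [hnormw]
        calc r⁻¹ * ‖y - a‖ < r⁻¹ * (r * Real.exp (b / n)) := by
              apply mul_lt_mul_of_pos_left hy2 (inv_pos.mpr hr)
          _ = Real.exp (b / n) := by field_simp
      rw [hUdef]
      constructor
      · rw [hv_eq]; positivity
      · rw [hv_eq y, Real.log_pow]
        have hlt : Real.log ‖w y‖ < b / n := by
          calc Real.log ‖w y‖ < Real.log (Real.exp (b / n)) := Real.log_lt_log hwpos hwlt
            _ = b / n := Real.log_exp _
        push_cast
        calc (n:ℝ)/2 * (2 * Real.log ‖w y‖) = n * Real.log ‖w y‖ := by ring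
          _ < n * (b / n) := by exact mul_lt_mul_of_pos_left hlt hnpos
          _ = b := by field_simp
    have hvx : v x = 1 := by
      rw [hv_eq, hnormw, ← hrdef]
      field_simp
    set Φ : ℝ → ℝ := fun u => (b - (n:ℝ)/2 * Real.log u) ^ β - b ^ β with hΦdef
    have hΦcont : ContDiffOn ℝ (⊤ : WithTop ℕ∞) Φ U := by
      rw [hΦdef, hUdef]
      exact (contDiffOn_logrpow ((n:ℝ)/2) β b).sub contDiffOn_const
    have hwsm : ContDiff ℝ (⊤ : WithTop ℕ∞) w := by
      rw [hwdef]; exact (contDiff_id.sub contDiff_const).const_smul r⁻¹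
    have hvsm : ContDiff ℝ (⊤ : WithTop ℕ∞) v := by
      rw [hvdef]
      exact ((Binner n).isBoundedBilinearMap.contDiff).comp (hwsm.prodMk hwsm)
    -- key identity for the logarithm
    have hlog_id : ∀ y ∈ s₁, Real.log (Real.exp 1 * 4 ^ n / ‖y - a‖ ^ n)
        = b - (n:ℝ)/2 * Real.log (v y) := by
      intro y hy
      rw [hs₁def] at hy
      have hy1 : (0:ℝ) < ‖y - a‖ := hy.1
      rw [Real.log_div (ne_of_gt hE4pos) (pow_ne_zero n (ne_of_gt hy1)), Real.log_pow]
      rw [hv_eq y, Real.log_pow, hnormw y, Real.log_mul (inv_ne_zero (ne_of_gt hr))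
        (ne_of_gt hy1), Real.log_inv]
      rw [hbdef]
      push_cast
      ring
    set G : EuclideanSpace ℝ (Fin n) → ℝ :=
      fun y => Real.log (Real.exp 1 * 4 ^ n / ‖y - a‖ ^ n) ^ β with hGdef
    have hGeq : Set.EqOn G (fun y => (Φ ∘ v) y + b ^ β) s₁ := by
      intro y hy
      rw [hGdef]
      simp only [Function.comp_apply, hΦdef]
      rw [hlog_id y hy]
      ring
    have hGsm : ContDiffOn ℝ (⊤ : WithTop ℕ∞) G s₁ := by
      apply ContDiffOn.congr _ hGeq
      exact (hΦcont.comp hvsm.contDiffOn hmaps).add contDiffOn_const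
    -- membership of 1 in U
    have h1U : (1:ℝ) ∈ U := by
      rw [hUdef]
      refine ⟨one_pos, ?_⟩
      simp only [Real.log_one, mul_zero]
      exact hbpos
    have hXpos : (0:ℝ) < b ^ (β - 1) := Real.rpow_pos_of_pos hbpos _
    have hRpos : (0:ℝ) < r ^ (-(k:ℝ)) := Real.rpow_pos_of_pos hr _
    -- derivative bounds for Φ at 1
    have hΦbound : ∀ i, 1 ≤ i → i ≤ s →
        ‖iteratedFDerivWithin ℝ i Φ U 1‖ ≤ B * b ^ (β - 1) := by
      intro i hi1 his
      rw [iteratedFDerivWithin_of_isOpen i hUopen h1U]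
      rw [norm_iteratedFDeriv_eq_norm_iteratedDeriv, Real.norm_eq_abs]
      have hstep : iteratedDeriv i Φ 1
          = iteratedDeriv i (fun u => (b - (n:ℝ)/2 * Real.log u) ^ β) 1 := by
        match i, hi1 with
        | (m+1), _ =>
          rw [iteratedDeriv_succ', iteratedDeriv_succ']
          congr 1
          funext u
          rw [hΦdef]
          exact deriv_sub_const _
      rw [hstep]
      have hcond : (1:ℝ) ≤ b - (n:ℝ)/2 * Real.log 1 := by
        simp only [Real.log_one, mul_zero, sub_zero]; exact hb1
      have := hB i hi1 his b 1 one_pos hcond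
      simp only [Real.log_one, mul_zero, sub_zero, Real.one_rpow, mul_one] at this
      exact this
    have hC : ∀ i, i ≤ k → ‖iteratedFDerivWithin ℝ i Φ U (v x)‖ ≤ B * b ^ (β - 1) := by
      intro i hik
      rw [hvx]
      rcases Nat.eq_zero_or_pos i with hi0 | hi0
      · subst hi0
        rw [norm_iteratedFDerivWithin_zero]
        have hΦ1 : Φ 1 = 0 := by
          rw [hΦdef]; simp [Real.log_one]
        rw [hΦ1, norm_zero]
        positivity
      · exact hΦbound i hi0 (le_trans hik hks)
    have hD : ∀ i, 1 ≤ i → i ≤ k → ‖iteratedFDerivWithin ℝ i v s₁ x‖ ≤ (2/r)^i := by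
      intro i hi1 _
      rw [iteratedFDerivWithin_of_isOpen i hs₁open hxs₁]
      rw [hvdef, hwdef]
      exact norm_iteratedFDeriv_v_le a x r hr hrdef.symm i hi1
    -- rpow helper
    have hrpow : ∀ j : ℕ, j ≤ k → r ^ (-(j:ℝ)) ≤ 4^s * r ^ (-(k:ℝ)) := by
      intro j hjk
      have h1 : r ^ (-(j:ℝ)) = r ^ (-(k:ℝ)) * r ^ ((k:ℝ) - j) := by
        rw [← Real.rpow_add hr]; congr 1; ring
      rw [h1]
      have h2 : r ^ ((k:ℝ) - j) ≤ (4:ℝ) ^ ((k:ℝ) - j) :=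
        Real.rpow_le_rpow hr.le hr4.le (by
          have : (j:ℝ) ≤ k := by exact_mod_cast hjk
          linarith)
      have h3 : (4:ℝ) ^ ((k:ℝ) - (j:ℝ)) ≤ (4:ℝ) ^ ((s:ℕ):ℝ) :=
        Real.rpow_le_rpow_of_exponent_le (by norm_num) (by
          have h4 : (k:ℝ) ≤ s := by exact_mod_cast hks
          have h5 : (0:ℝ) ≤ j := by positivity
          linarith)
      have h4 : (4:ℝ) ^ ((s:ℕ):ℝ) = 4^s := Real.rpow_natCast 4 s
      have h6 : (0:ℝ) < r ^ ((k:ℝ) - j) := Real.rpow_pos_of_pos hr _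
      nlinarith
    -- bound for all the within-derivatives of G at x
    have hGbound : ∀ j, j ≤ k → ‖iteratedFDerivWithin ℝ j G s₁ x‖
        ≤ CG * b ^ (β-1) * r ^ (-(k:ℝ)) := by
      intro j hjk
      have hbub : b ≤ c₂ * r⁻¹ := by
        have hlogr : Real.log r⁻¹ ≤ r⁻¹ := by
          have h1 := Real.log_le_sub_one_of_pos (inv_pos.mpr hr)
          linarith
        have hb2 : b = Real.log (Real.exp 1 * 4^n) + n * Real.log r⁻¹ := by
          rw [hbdef, Real.log_inv]; ring
        have h4r : (1:ℝ) ≤ 4 * r⁻¹ := by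
          rw [le_mul_inv_iff₀ hr]; linarith
        have hrinv : (0:ℝ) < r⁻¹ := inv_pos.mpr hr
        rw [hb2, hc₂def]
        have hnlog : (n:ℝ) * Real.log r⁻¹ ≤ n * r⁻¹ :=
          mul_le_mul_of_nonneg_left hlogr (by positivity)
        nlinarith
      rcases Nat.eq_zero_or_pos j with hj0 | hj1
      · subst hj0
        rw [norm_iteratedFDerivWithin_zero]
        have hGx : G x = b ^ β := by
          rw [hGdef]
          show Real.log (Real.exp 1 * 4 ^ n / ‖x - a‖ ^ n) ^ β = b ^ β
          rw [← hrdef, hb_eq]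
        rw [hGx, Real.norm_eq_abs, abs_of_pos (Real.rpow_pos_of_pos hbpos β)]
        have hbβ : b ^ β = b ^ (β-1) * b := by
          rw [← Real.rpow_add_one (ne_of_gt hbpos) (β-1)]
          ring_nf
        have hr1 : r⁻¹ ≤ 4^s * r ^ (-(k:ℝ)) := by
          have := hrpow 1 hk1
          rw [Nat.cast_one, Real.rpow_neg_one] at this
          exact this
        have hble : b ≤ c₂ * (4^s * r ^ (-(k:ℝ))) := by
          have h4sR : (0:ℝ) < 4^s * r ^ (-(k:ℝ)) := by positivity
          calc b ≤ c₂ * r⁻¹ := hbub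
            _ ≤ c₂ * (4^s * r ^ (-(k:ℝ))) :=
              mul_le_mul_of_nonneg_left hr1 hc₂pos.le
        calc b ^ β = b ^ (β-1) * b := hbβ
          _ ≤ b ^ (β-1) * (c₂ * (4^s * r ^ (-(k:ℝ)))) :=
              mul_le_mul_of_nonneg_left hble hXpos.le
          _ = (c₂ * 4^s) * b ^ (β-1) * r ^ (-(k:ℝ)) := by ring
          _ ≤ CG * b ^ (β-1) * r ^ (-(k:ℝ)) := by
              have hfB : (0:ℝ) ≤ (s.factorial : ℝ) * B * 2^s * 4^s := by positivity
              have hle : c₂ * 4^s ≤ CG := by rw [hCGdef]; linarith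
              exact mul_le_mul_of_nonneg_right
                (mul_le_mul_of_nonneg_right hle hXpos.le) hRpos.le
      · -- j ≥ 1 : composition bound
        rw [iteratedFDerivWithin_congr hGeq hxs₁]
        rw [iteratedFDerivWithin_add_apply' (((hΦcont.comp hvsm.contDiffOn hmaps).of_le le_top) x hxs₁)
          contDiffWithinAt_const hs₁open.uniqueDiffOn hxs₁]
        rw [iteratedFDerivWithin_const_of_ne (n := j) (by omega) _ s₁, Pi.zero_apply, add_zero]
        have hcomp := norm_iteratedFDerivWithin_comp_le (n := j) hΦcont hvsm.contDiffOn
          le_top hUopen.uniqueDiffOn hs₁open.uniqueDiffOn hmaps hxs₁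
          (C := B * b ^ (β-1)) (D := 2/r)
          (fun i hij => hC i (le_trans hij hjk))
          (fun i hi1 hij => hD i hi1 (le_trans hij hjk))
        refine hcomp.trans ?_
        have hdivpow : ((2:ℝ)/r)^j = 2^j * r ^ (-(j:ℝ)) := by
          rw [div_pow, Real.rpow_neg hr.le, Real.rpow_natCast, div_eq_mul_inv]
        have e1 : ((j.factorial:ℝ)) ≤ (s.factorial:ℝ) := by
          exact_mod_cast Nat.factorial_le (le_trans hjk hks)
        have e2 : (2:ℝ)^j ≤ 2^s := by
          apply pow_le_pow_right₀ (by norm_num) (le_trans hjk hks)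
        have e3 := hrpow j hjk
        have hjf : (0:ℝ) < (j.factorial:ℝ) := by exact_mod_cast j.factorial_pos
        calc (j.factorial:ℝ) * (B * b ^ (β-1)) * (2/r)^j
            = ((j.factorial:ℝ) * B * 2^j) * (b ^ (β-1) * r ^ (-(j:ℝ))) := by
              rw [hdivpow]; ring
          _ ≤ ((s.factorial:ℝ) * B * 2^s) * (b ^ (β-1) * (4^s * r ^ (-(k:ℝ)))) := by
              apply mul_le_mul
              · have h2j : (0:ℝ) < (2:ℝ)^j := by positivity
                have e4 : (j.factorial:ℝ) * B ≤ (s.factorial:ℝ) * B :=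
                  mul_le_mul_of_nonneg_right e1 hBpos.le
                have e5 : (j.factorial:ℝ) * B * 2^j ≤ (s.factorial:ℝ) * B * 2^j :=
                  mul_le_mul_of_nonneg_right e4 h2j.le
                have e6 : (s.factorial:ℝ) * B * 2^j ≤ (s.factorial:ℝ) * B * 2^s := by
                  apply mul_le_mul_of_nonneg_left e2
                  positivity
                linarith
              · exact mul_le_mul_of_nonneg_left e3 hXpos.le
              · positivity
              · positivity
          _ = ((s.factorial:ℝ) * B * 2^s * 4^s) * b ^ (β-1) * r ^ (-(k:ℝ)) := by ring
          _ ≤ CG * b ^ (β-1) * r ^ (-(k:ℝ)) := by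
              have h1 : (s.factorial:ℝ) * B * 2^s * 4^s ≤ CG := by
                rw [hCGdef]
                nlinarith [hc₂pos, pow_pos (by norm_num : (0:ℝ) < 4) s]
              exact mul_le_mul_of_nonneg_right
                (mul_le_mul_of_nonneg_right h1 hXpos.le) hRpos.le
    -- final Leibniz assembly
    have hmain := norm_iteratedFDerivWithin_mul_le (𝕜 := ℝ) (A := ℝ)
      (hψ.contDiffOn : ContDiffOn ℝ ((⊤ : ℕ∞) : WithTop ℕ∞) ψ s₁) (hGsm.of_le le_top) hs₁open.uniqueDiffOn
      (hxs₁ : x ∈ s₁) (n := k) (by exact_mod_cast le_top)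
    have hgoal_eq : (fun y => ψ y * Real.log (Real.exp 1 * 4 ^ n / ‖y - a‖ ^ n) ^ β)
        = fun y => ψ y * G y := by
      funext y; rw [hGdef]
    rw [hgoal_eq, hb_eq]
    rw [← iteratedFDerivWithin_of_isOpen k hs₁open hxs₁]
    refine hmain.trans ?_
    have hterm : ∀ i ∈ Finset.range (k+1),
        (k.choose i : ℝ) * ‖iteratedFDerivWithin ℝ i ψ s₁ x‖ *
          ‖iteratedFDerivWithin ℝ (k-i) G s₁ x‖
        ≤ (k.choose i : ℝ) * (M * (CG * b ^ (β-1) * r ^ (-(k:ℝ)))) := by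
      intro i hi
      have hik : i ≤ k := by
        have := Finset.mem_range.mp hi; omega
      have h1 : ‖iteratedFDerivWithin ℝ i ψ s₁ x‖ ≤ M := by
        rw [iteratedFDerivWithin_of_isOpen i hs₁open hxs₁]
        exact hM i (le_trans hik hks) x
      have h2 := hGbound (k-i) (Nat.sub_le k i)
      have hch : (0:ℝ) ≤ (k.choose i : ℝ) := by positivity
      calc (k.choose i : ℝ) * ‖iteratedFDerivWithin ℝ i ψ s₁ x‖ *
            ‖iteratedFDerivWithin ℝ (k-i) G s₁ x‖
          ≤ ((k.choose i : ℝ) * M) * (CG * b ^ (β-1) * r ^ (-(k:ℝ))) := by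
            apply mul_le_mul
            · exact mul_le_mul_of_nonneg_left h1 hch
            · exact h2
            · exact norm_nonneg _
            · positivity
        _ = (k.choose i : ℝ) * (M * (CG * b ^ (β-1) * r ^ (-(k:ℝ)))) := by ring
    refine (Finset.sum_le_sum hterm).trans ?_
    rw [← Finset.sum_mul]
    have hchoose : ∑ i ∈ Finset.range (k+1), (k.choose i : ℝ) = 2^k := by
      exact_mod_cast Nat.sum_range_choose k
    rw [hchoose]
    have h2k : (2:ℝ)^k ≤ 2^s := by
      apply pow_le_pow_right₀ (by norm_num) hks
    have hP : (0:ℝ) < b ^ (β-1) * r ^ (-(k:ℝ)) := mul_pos hXpos hRpos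
    have hMCG : (0:ℝ) < M * CG := mul_pos hMpos hCGpos
    have key : (2:ℝ)^k * (M * CG) ≤ 2^s * (M * CG) :=
      mul_le_mul_of_nonneg_right h2k hMCG.le
    calc (2:ℝ)^k * (M * (CG * b ^ (β-1) * r ^ (-(k:ℝ))))
        = ((2:ℝ)^k * (M * CG)) * (b ^ (β-1) * r ^ (-(k:ℝ))) := by ring
      _ ≤ ((2:ℝ)^s * (M * CG)) * (b ^ (β-1) * r ^ (-(k:ℝ))) :=
          mul_le_mul_of_nonneg_right key hP.le
      _ ≤ ((M * CG * 2^s + 1) * 1) * (b ^ (β-1) * r ^ (-(k:ℝ))) := by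
          have : (2:ℝ)^s * (M * CG) ≤ (M * CG * 2^s + 1) * 1 := by nlinarith
          exact mul_le_mul_of_nonneg_right this hP.le
      _ = (M * CG * 2^s + 1) * 1 * b ^ (β-1) * r ^ (-(k:ℝ)) := by ring
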